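/- Fix a channel coefficient h ∈ ℂ with h ≠ 0 and constants a > 0, b > 0. Then the MVU filter f_MVU = x/‖x‖² is not a minimizer of the zeroth-order error probability: there exists a nonzero filter f ∈ ℂ^B with P0(f) < P0(f_MVU). (Proposition 6: the MVU estimator is not optimal for minimizing [P_e]_0 given the true channel.) -/

import Mathlib

/-!
Rescaling `f_MVU` by a real factor `c` keeps the filter in the direction of `x`, so that
`φ = c` and `‖f‖² = c² / ‖x‖²`, and then
`M_dc = σx² s / (|h|² + s) + (σx² |h|² (c - 1)² + σw²) / (c² (|h|² + s))` with `s = σw² / ‖x‖²`.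
The second term equals `σw² / (|h|² + s)` at `c = 1` but is strictly smaller at its minimiser
`c = 1 + σw² / (σx² |h|²)`: the biased filter trades a little bias for less noise. Since `Q` is
strictly decreasing, a smaller MSE gives a smaller error probability.
-/

open MeasureTheory

/-- `φ(f) = fᴴ x = Σᵢ conj(fᵢ)·xᵢ`. -/
noncomputable def phi {B : ℕ} (x f : Fin B → ℂ) : ℂ :=
  ∑ i, (starRingEnd ℂ) (f i) * x i

/-- Squared Euclidean norm `‖f‖² = Σᵢ |fᵢ|²`. -/
noncomputable def nsq {B : ℕ} (f : Fin B → ℂ) : ℝ :=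
  ∑ i, Complex.normSq (f i)

/-- Zeroth-order symbol-estimate MSE of the ZF equalizer, deterministic channel `h`. -/
noncomputable def Mdc {B : ℕ} (σx2 σw2 : ℝ) (h : ℂ) (x f : Fin B → ℂ) : ℝ :=
  (σx2 * (Complex.normSq h * Complex.normSq (phi x f - 1) + σw2 * nsq f) + σw2) /
    (Complex.normSq h * Complex.normSq (phi x f) + σw2 * nsq f)

/-- Standard Gaussian tail function `Q(u) = (1/√(2π)) ∫_u^∞ e^{−t²/2} dt`. -/
noncomputable def Qfun (u : ℝ) : ℝ :=
  (Real.sqrt (2 * Real.pi))⁻¹ * ∫ t in Set.Ioi u, Real.exp (-t ^ 2 / 2)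

/-- Zeroth-order error probability `[P_e]₀ = a·Q(b·√(σx²/M_dc(f)))`. -/
noncomputable def P0dc {B : ℕ} (a b σx2 σw2 : ℝ) (h : ℂ) (x f : Fin B → ℂ) : ℝ :=
  a * Qfun (b * Real.sqrt (σx2 / Mdc σx2 σw2 h x f))

/-- The MVU channel-estimating filter `f_MVU = x / ‖x‖²`. -/
noncomputable def fMVU {B : ℕ} (x : Fin B → ℂ) : Fin B → ℂ :=
  fun i => x i / (nsq x : ℂ)

theorem strictAnti_integral_Ioi {f : ℝ → ℝ} (hf : Integrable f) (hpos : ∀ t, 0 < f t) :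
    StrictAnti fun u => ∫ t in Set.Ioi u, f t := by
  intro u v huv
  have hsplit := intervalIntegral.integral_Ioi_sub_Ioi (f := f) hf.integrableOn huv.le
  have hmid := intervalIntegral.intervalIntegral_pos_of_pos
    (hf.intervalIntegrable (a := u) (b := v)) hpos huv
  simp only
  linarith

theorem Qfun_strictAnti : StrictAnti Qfun := by
  have hgauss : Integrable fun t : ℝ => Real.exp (-t ^ 2 / 2) := by
    simpa [neg_div, div_eq_inv_mul] using integrable_exp_neg_mul_sq (b := (1 / 2 : ℝ)) one_half_pos
  refine fun u v huv => mul_lt_mul_of_pos_left ?_ (by positivity)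
  exact strictAnti_integral_Ioi hgauss (fun t => Real.exp_pos _) huv

section Filters

variable {B : ℕ}

theorem phi_smul (x f : Fin B → ℂ) (c : ℂ) : phi x (c • f) = starRingEnd ℂ c * phi x f := by
  simp only [phi, Pi.smul_apply, smul_eq_mul, map_mul, Finset.mul_sum, mul_assoc]

theorem nsq_smul (f : Fin B → ℂ) (c : ℂ) : nsq (c • f) = Complex.normSq c * nsq f := by
  simp only [nsq, Pi.smul_apply, smul_eq_mul, Complex.normSq_mul, Finset.mul_sum]

theorem nsq_nonneg (f : Fin B → ℂ) : 0 ≤ nsq f :=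
  Finset.sum_nonneg fun i _ => Complex.normSq_nonneg (f i)

theorem nsq_pos {x : Fin B → ℂ} (hx : x ≠ 0) : 0 < nsq x := by
  obtain ⟨i, hi⟩ := Function.ne_iff.1 hx
  exact (Complex.normSq_pos.2 hi).trans_le
    (Finset.single_le_sum (fun j _ => Complex.normSq_nonneg (x j)) (Finset.mem_univ i))

theorem phi_fMVU {x : Fin B → ℂ} (hx : x ≠ 0) : phi x (fMVU x) = 1 := by
  have hN : (nsq x : ℂ) ≠ 0 := Complex.ofReal_ne_zero.2 (nsq_pos hx).ne'
  have hterm (i : Fin B) :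
      starRingEnd ℂ (fMVU x i) * x i = (Complex.normSq (x i) : ℂ) / nsq x := by
    rw [fMVU, map_div₀, Complex.conj_ofReal, div_mul_eq_mul_div, mul_comm, Complex.mul_conj]
  rw [phi, Finset.sum_congr rfl fun i _ => hterm i, ← Finset.sum_div, ← Complex.ofReal_sum]
  exact div_self hN

theorem fMVU_ne_zero {x : Fin B → ℂ} (hx : x ≠ 0) : fMVU x ≠ 0 := by
  intro h0
  simpa [h0, phi] using phi_fMVU hx

theorem P0dc_lt_of_Mdc_lt {a b σx2 σw2 : ℝ} {h : ℂ} {x f g : Fin B → ℂ} (ha : 0 < a)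
    (hb : 0 < b) (hσx : 0 < σx2) (hf : 0 < Mdc σx2 σw2 h x f)
    (hfg : Mdc σx2 σw2 h x f < Mdc σx2 σw2 h x g) :
    P0dc a b σx2 σw2 h x f < P0dc a b σx2 σw2 h x g := by
  have hsqrt := Real.sqrt_lt_sqrt (div_pos hσx (hf.trans hfg)).le
    (div_lt_div_of_pos_left hσx hf hfg)
  exact mul_lt_mul_of_pos_left (Qfun_strictAnti (mul_lt_mul_of_pos_left hsqrt hb)) ha

end Filters

/-- The MSE `M_dc` along the ray `c ↦ c • f` through a filter with `φ(f) = 1`, in terms of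
`A = |h|²` and `n = ‖f‖²`. -/
noncomputable def scaledMse (σx2 σw2 A n c : ℝ) : ℝ :=
  (σx2 * (A * (c - 1) ^ 2 + σw2 * (c ^ 2 * n)) + σw2) / (c ^ 2 * (A + σw2 * n))

theorem Mdc_ofReal_smul {B : ℕ} (σx2 σw2 : ℝ) (h : ℂ) {x f : Fin B → ℂ} (hf : phi x f = 1)
    (c : ℝ) :
    Mdc σx2 σw2 h x ((c : ℂ) • f) = scaledMse σx2 σw2 (Complex.normSq h) (nsq f) c := by
  have hsub : (c : ℂ) - 1 = ((c - 1 : ℝ) : ℂ) := by push_cast; rfl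
  rw [Mdc, scaledMse, phi_smul, nsq_smul, hf, Complex.conj_ofReal, mul_one, hsub]
  simp only [Complex.normSq_ofReal]
  ring

theorem scaledMse_pos {σx2 σw2 A n c : ℝ} (hσx : 0 ≤ σx2) (hσw : 0 < σw2) (hA : 0 ≤ A)
    (hn : 0 ≤ n) (hc : c ≠ 0) (hden : 0 < A + σw2 * n) : 0 < scaledMse σx2 σw2 A n c := by
  unfold scaledMse
  positivity

theorem scaledMse_lt_scaledMse_one {σx2 σw2 A n c : ℝ} (hc : c ≠ 0)
    (hden : 0 < A + σw2 * n) (hgain : σx2 * A * (c - 1) ^ 2 + σw2 < σw2 * c ^ 2) :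
    scaledMse σx2 σw2 A n c < scaledMse σx2 σw2 A n 1 := by
  unfold scaledMse
  rw [div_lt_div_iff₀ (by positivity) (by simpa using hden)]
  have hc2 : 0 < c ^ 2 := by positivity
  nlinarith [mul_lt_mul_of_pos_right hgain hden]

/-- `1 + σw2 / (σx2 * A)` minimises `c ↦ (σx2 * A * (c - 1) ^ 2 + σw2) / c ^ 2`. -/
theorem scaledMse_optimal_lt_scaledMse_one {σx2 σw2 A n : ℝ} (hσx : 0 < σx2) (hσw : 0 < σw2)
    (hA : 0 < A) (hn : 0 ≤ n) :
    scaledMse σx2 σw2 A n (1 + σw2 / (σx2 * A)) < scaledMse σx2 σw2 A n 1 := by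
  set c := 1 + σw2 / (σx2 * A) with hc_def
  have hc : 1 < c := lt_add_of_pos_right 1 (by positivity)
  have hbias : σx2 * A * (c - 1) ^ 2 + σw2 = σw2 * c := by
    rw [hc_def]
    field_simp
    ring
  refine scaledMse_lt_scaledMse_one (by positivity) (by positivity) ?_
  rw [hbias]
  nlinarith

theorem mvu_not_optimal_zeroth_order_pe_general
    (B : ℕ) (x : Fin B → ℂ) (hx : x ≠ 0)
    (σx2 σw2 : ℝ) (hσx : 0 < σx2) (hσw : 0 < σw2)
    (h : ℂ) (hh : h ≠ 0) (a b : ℝ) (ha : 0 < a) (hb : 0 < b) :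
    ∃ f : Fin B → ℂ, f ≠ 0 ∧
      P0dc a b σx2 σw2 h x f < P0dc a b σx2 σw2 h x (fMVU x) := by
  have hA : 0 < Complex.normSq h := Complex.normSq_pos.2 hh
  have hn := nsq_nonneg (fMVU x)
  set c : ℝ := 1 + σw2 / (σx2 * Complex.normSq h)
  have hc : 0 < c := by positivity
  have hMdc (c : ℝ) := Mdc_ofReal_smul σx2 σw2 h (phi_fMVU hx) c
  have hMdc_one := hMdc 1
  rw [Complex.ofReal_one, one_smul] at hMdc_one
  refine ⟨(c : ℂ) • fMVU x, smul_ne_zero (Complex.ofReal_ne_zero.2 hc.ne') (fMVU_ne_zero hx), ?_⟩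
  refine P0dc_lt_of_Mdc_lt ha hb hσx ?_ ?_
  · rw [hMdc]
    exact scaledMse_pos hσx.le hσw hA.le hn hc.ne' (by positivity)
  · rw [hMdc, hMdc_one]
    exact scaledMse_optimal_lt_scaledMse_one hσx hσw hA hn

/-- Proposition 6: the MVU estimator is not optimal for minimizing the
zeroth-order error probability `[P_e]₀` given the true channel. -/
theorem mvu_not_optimal_zeroth_order_pe
    (B : ℕ) (hB : 1 ≤ B) (x : Fin B → ℂ) (hx : x ≠ 0)
    (σx2 σw2 : ℝ) (hσx : 0 < σx2) (hσw : 0 < σw2)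
    (h : ℂ) (hh : h ≠ 0) (a b : ℝ) (ha : 0 < a) (hb : 0 < b) :
    ∃ f : Fin B → ℂ, f ≠ 0 ∧
      P0dc a b σx2 σw2 h x f < P0dc a b σx2 σw2 h x (fMVU x) :=
  mvu_not_optimal_zeroth_order_pe_general B x hx σx2 σw2 hσx hσw h hh a b ha hb
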